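/- Let ω be a continuous closed 1-form on a topological space X and x_0 ∈ X. Then the assignment sending a loop γ : [0,1] → X based at x_0 to the line integral ∫_γ ω descends to a well-defined group homomorphism π_1(X, x_0) → (ℝ, +), called the homomorphism of periods of ω. -/

import Mathlib

open Set

/-- A continuous closed 1-form on a topological space `X`: a collection of continuous
real-valued functions on the members of an open cover whose pairwise differences are
locally constant on overlaps. -/
structure ClosedOneForm (X : Type) [TopologicalSpace X] where
  ι : Type
  U : ι → Set X
  isOpen : ∀ i, IsOpen (U i)
  covers : ∀ x : X, ∃ i, x ∈ U i
  f : ι → X → ℝ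
  cont : ∀ i, ContinuousOn (f i) (U i)
  locConst : ∀ i j, IsLocallyConstant (fun y : ↥(U i ∩ U j) => f i y - f j y)

namespace ClosedOneForm

variable {X Y : Type} [TopologicalSpace X] [TopologicalSpace Y]

/-- `r` is the value of the line integral of `ω` along `γ` over `[a,b]`, computed via a
partition `a = t_0 < t_1 < ⋯ < t_n = b` with `γ [t_i, t_{i+1}] ⊆ U (c i)`. -/
def IsIntegralOn (ω : ClosedOneForm X) (γ : ℝ → X) (a b r : ℝ) : Prop :=
  ∃ (n : ℕ) (t : ℕ → ℝ) (c : ℕ → ω.ι),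
    0 < n ∧ t 0 = a ∧ t n = b ∧ (∀ i < n, t i < t (i + 1)) ∧
    (∀ i < n, MapsTo γ (Icc (t i) (t (i + 1))) (ω.U (c i))) ∧
    r = ∑ i ∈ Finset.range n, (ω.f (c i) (γ (t (i + 1))) - ω.f (c i) (γ (t i)))

/-- The line integral of `ω` along `γ` over `[a,b]` (`0` if no suitable partition exists,
in particular it is `0` for a degenerate interval). -/
noncomputable def intOn (ω : ClosedOneForm X) (γ : ℝ → X) (a b : ℝ) : ℝ :=
  haveI := Classical.propDecidable
  if h : ∃ r, ω.IsIntegralOn γ a b r then h.choose else 0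

/-- The pullback of a continuous closed 1-form along a continuous map. -/
noncomputable def pullback (ω : ClosedOneForm X) (φ : Y → X) (hφ : Continuous φ) :
    ClosedOneForm Y where
  ι := ω.ι
  U i := φ ⁻¹' ω.U i
  isOpen i := (ω.isOpen i).preimage hφ
  covers y := ω.covers (φ y)
  f i := ω.f i ∘ φ
  cont i := (ω.cont i).comp hφ.continuousOn (mapsTo_preimage φ (ω.U i))
  locConst i j := by
    have h := (ω.locConst i j).comp_continuous
      (f := fun y : ↥(φ ⁻¹' ω.U i ∩ φ ⁻¹' ω.U j) =>
        (⟨φ y.1, y.2⟩ : ↥(ω.U i ∩ ω.U j)))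
      (by exact Continuous.subtype_mk (hφ.comp continuous_subtype_val) _)
    exact h

/-- The restriction of a continuous closed 1-form to a subspace. -/
noncomputable def restrict (ω : ClosedOneForm X) (B : Set X) : ClosedOneForm B :=
  ω.pullback (Subtype.val : B → X) continuous_subtype_val

/-- The sum of two continuous closed 1-forms, on the common refinement of the covers. -/
noncomputable def add (ω₁ ω₂ : ClosedOneForm X) : ClosedOneForm X where
  ι := ω₁.ι × ω₂.ι
  U p := ω₁.U p.1 ∩ ω₂.U p.2
  isOpen p := (ω₁.isOpen p.1).inter (ω₂.isOpen p.2)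
  covers x := by
    obtain ⟨i, hi⟩ := ω₁.covers x
    obtain ⟨j, hj⟩ := ω₂.covers x
    exact ⟨(i, j), hi, hj⟩
  f p x := ω₁.f p.1 x + ω₂.f p.2 x
  cont p := ((ω₁.cont p.1).mono inter_subset_left).add ((ω₂.cont p.2).mono inter_subset_right)
  locConst := by
    rintro ⟨i, j⟩ ⟨i', j'⟩
    have h₁ : IsLocallyConstant
        (fun y : ↥((ω₁.U i ∩ ω₂.U j) ∩ (ω₁.U i' ∩ ω₂.U j')) => ω₁.f i y - ω₁.f i' y) :=
      by
        have := (ω₁.locConst i i').comp_continuous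
          (f := fun y : ↥((ω₁.U i ∩ ω₂.U j) ∩ (ω₁.U i' ∩ ω₂.U j')) =>
            (⟨y.1, y.2.1.1, y.2.2.1⟩ : ↥(ω₁.U i ∩ ω₁.U i')))
          (Continuous.subtype_mk continuous_subtype_val _)
        exact this
    have h₂ : IsLocallyConstant
        (fun y : ↥((ω₁.U i ∩ ω₂.U j) ∩ (ω₁.U i' ∩ ω₂.U j')) => ω₂.f j y - ω₂.f j' y) :=
      by
        have := (ω₂.locConst j j').comp_continuous
          (f := fun y : ↥((ω₁.U i ∩ ω₂.U j) ∩ (ω₁.U i' ∩ ω₂.U j')) =>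
            (⟨y.1, y.2.1.2, y.2.2.2⟩ : ↥(ω₂.U j ∩ ω₂.U j')))
          (Continuous.subtype_mk continuous_subtype_val _)
        exact this
    have := h₁.add h₂
    convert this using 1
    funext y
    simp only [Pi.add_apply]
    ring

/-- Adding the exact form `df` of a continuous function `f` to `ω`. -/
def addFun (ω : ClosedOneForm X) (g : X → ℝ) (hg : Continuous g) : ClosedOneForm X where
  ι := ω.ι
  U := ω.U
  isOpen := ω.isOpen
  covers := ω.covers
  f i x := ω.f i x + g x
  cont i := (ω.cont i).add hg.continuousOn
  locConst i j := by
    have := ω.locConst i j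
    convert this using 1
    funext y
    ring

/-- The exact continuous closed 1-form `df` determined by a continuous function `f`,
given by the single function `f` on the open cover `{X}`. -/
def ofFun (g : X → ℝ) (hg : Continuous g) : ClosedOneForm X where
  ι := PUnit
  U _ := univ
  isOpen _ := isOpen_univ
  covers x := ⟨PUnit.unit, mem_univ x⟩
  f _ := g
  cont _ := hg.continuousOn
  locConst _ _ := by
    have : (fun y : ↥((univ : Set X) ∩ univ) => g y - g y) = fun _ => (0 : ℝ) := by
      funext; ring
    rw [this]
    exact IsLocallyConstant.const 0

/-- Two continuous closed 1-forms are equivalent if the union of their collections is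
again a continuous closed 1-form. -/
def Equivalent (ω₁ ω₂ : ClosedOneForm X) : Prop :=
  ∀ (i : ω₁.ι) (j : ω₂.ι),
    IsLocallyConstant (fun y : ↥(ω₁.U i ∩ ω₂.U j) => ω₁.f i y - ω₂.f j y)

end ClosedOneForm

section Pre2

open Set

variable {X : Type} [TopologicalSpace X]

namespace ClosedOneForm

/-- `D` is `(N,C)`-movable relative to `B` with respect to `ω`: there is a homotopy of the
inclusion `D ↪ X` keeping `B` inside `B`, such that every point of `D` either ends up in `B`
or travels a distance at most `-N` as measured by `ω`, while the integral along each partial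
trajectory stays bounded by `C`. -/
def IsMovable (ω : ClosedOneForm X) (B D : Set X) (N : ℕ) (C : ℝ) : Prop :=
  B ⊆ D ∧
  ∃ h : X → ℝ → X,
    ContinuousOn (fun p : X × ℝ => h p.1 p.2) (D ×ˢ Icc (0 : ℝ) 1) ∧
    (∀ x ∈ D, h x 0 = x) ∧
    (∀ t ∈ Icc (0 : ℝ) 1, ∀ b ∈ B, h b t ∈ B) ∧
    (∀ x ∈ D, h x 1 ∈ B ∨ ω.intOn (h x) 0 1 ≤ -(N : ℝ)) ∧
    (∀ x ∈ D, ∀ t ∈ Icc (0 : ℝ) 1, ω.intOn (h x) 0 t ≤ C)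

end ClosedOneForm

/-- The inclusion `A ↪ X` is null-homotopic in `X`. -/
def NullhomotopicIncl (A : Set X) : Prop :=
  ∃ (h : X → ℝ → X) (x₀ : X),
    ContinuousOn (fun p : X × ℝ => h p.1 p.2) (A ×ˢ Icc (0 : ℝ) 1) ∧
    (∀ x ∈ A, h x 0 = x) ∧ (∀ x ∈ A, h x 1 = x₀)

namespace ClosedOneForm

/-- There is a `C > 0` such that for every positive integer `N`, the space `X` admits an open
cover by `k` null-homotopic sets and one `(N,C)`-movable set relative to `B`. -/
def CatCoverProp (ω : ClosedOneForm X) (B : Set X) (k : ℕ) : Prop :=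
  ∃ C > (0 : ℝ), ∀ N : ℕ, 0 < N →
    ∃ (U₀ : Set X) (Ui : Fin k → Set X),
      IsOpen U₀ ∧ (∀ i, IsOpen (Ui i)) ∧
      U₀ ∪ (⋃ i, Ui i) = univ ∧
      (∀ i, NullhomotopicIncl (Ui i)) ∧
      ω.IsMovable B U₀ N C

/-- The relative Lusternik–Schnirelmann category `cat(X,B,ω)` of the pair `(X,B)` with respect
to the continuous closed 1-form `ω`. -/
noncomputable def catRel (ω : ClosedOneForm X) (B : Set X) : ℕ :=
  sInf {k | ω.CatCoverProp B k}

end ClosedOneForm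

/-- The classical relative Lusternik–Schnirelmann category `cat(X,B)`: the smallest `k` such
that `X` is covered by `k` open null-homotopic sets and one open set containing `B` which can
be deformed into `B` keeping `B` in `B`. -/
noncomputable def catClassical (X : Type) [TopologicalSpace X] (B : Set X) : ℕ :=
  sInf {k | ∃ (U₀ : Set X) (Ui : Fin k → Set X),
    IsOpen U₀ ∧ (∀ i, IsOpen (Ui i)) ∧
    U₀ ∪ (⋃ i, Ui i) = univ ∧
    (∀ i, NullhomotopicIncl (Ui i)) ∧
    B ⊆ U₀ ∧
    ∃ h : X → ℝ → X,
      ContinuousOn (fun p : X × ℝ => h p.1 p.2) (U₀ ×ˢ Icc (0 : ℝ) 1) ∧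
      (∀ x ∈ U₀, h x 0 = x) ∧
      (∀ t ∈ Icc (0 : ℝ) 1, ∀ b ∈ B, h b t ∈ B) ∧
      (∀ x ∈ U₀, h x 1 ∈ B)}

/-- A finite CW structure on a compact Hausdorff space `X`: a finite family of cells with
continuous characteristic maps defined on closed Euclidean balls, restricting to embeddings
on the open balls, whose images partition `X`, and whose boundary spheres are mapped into
the union of the cells of strictly smaller dimension. -/
structure FiniteCWStructure (X : Type) [TopologicalSpace X] where
  n : ℕ
  dim : Fin n → ℕ
  Φ : (i : Fin n) → (Fin (dim i) → ℝ) → X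
  cont : ∀ i, ContinuousOn (Φ i) (Metric.closedBall 0 1)
  embeds : ∀ i, Topology.IsEmbedding
    (fun x : ↥(Metric.ball (0 : Fin (dim i) → ℝ) 1) => Φ i x)
  cells_cover : (⋃ i, Φ i '' Metric.ball 0 1) = Set.univ
  cells_disjoint : ∀ i j, i ≠ j →
    Disjoint (Φ i '' Metric.ball 0 1) (Φ j '' Metric.ball 0 1)
  boundary : ∀ i, Φ i '' Metric.sphere 0 1 ⊆ ⋃ j ∈ {j | dim j < dim i}, Φ j '' Metric.ball 0 1

/-- `B` is a subcomplex of the finite CW structure `S`: a union of cells which is closed under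
attaching boundaries. -/
def FiniteCWStructure.IsSubcomplex (S : FiniteCWStructure X) (B : Set X) : Prop :=
  ∃ s : Set (Fin S.n),
    B = ⋃ i ∈ s, S.Φ i '' Metric.ball 0 1 ∧
    ∀ i ∈ s, S.Φ i '' Metric.sphere 0 1 ⊆ B

end Pre2


/-- The line integral of a continuous closed 1-form along a `Path`. -/
noncomputable def pathIntegral {X : Type} [TopologicalSpace X] (ω : ClosedOneForm X)
    {x y : X} (γ : Path x y) : ℝ :=
  ω.intOn (fun t => γ.extend t) 0 1

/-!
On a segment mapped into two charts, the increments of the two chart functions agree, because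
their difference is locally constant on a connected set. Peeling off the first interval of a
partition, this makes the value of the line integral independent of the partition. For homotopy
invariance, cut the homotopy square into a grid of cells each mapped into one chart: passing
from one row of the grid to the next changes the sum by a telescoping sum of increments along
vertical segments, which vanishes since the endpoints of the paths are fixed. Concatenation
glues partitions of `[0, 1/2]` and `[1/2, 1]`, so the integral is additive.
-/

theorem Finset.sum_range_sub_of_glue {M : Type*} [AddCommGroup M] (v : ℕ → ℕ → M) (n : ℕ)
    (hv : ∀ k < n, v k (k + 1) = v (k + 1) (k + 1)) :
    ∑ k ∈ Finset.range (n + 1), (v k (k + 1) - v k k) = v n (n + 1) - v 0 0 := by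
  induction n with
  | zero => simp
  | succ n ih =>
    rw [Finset.sum_range_succ, ih fun k hk => hv k (by omega), hv n n.lt_succ_self]
    abel

namespace ClosedOneForm

variable {X : Type} [TopologicalSpace X] {ω : ClosedOneForm X}

variable (ω) in
theorem sub_eq_sub_of_mapsTo_Icc {γ : ℝ → X} {a b : ℝ} (hab : a ≤ b)
    (hγ : ContinuousOn γ (Icc a b)) {i j : ω.ι} (hi : MapsTo γ (Icc a b) (ω.U i))
    (hj : MapsTo γ (Icc a b) (ω.U j)) :
    ω.f i (γ b) - ω.f i (γ a) = ω.f j (γ b) - ω.f j (γ a) := by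
  have : PreconnectedSpace (Icc a b) := Subtype.preconnectedSpace isPreconnected_Icc
  let g : Icc a b → ↥(ω.U i ∩ ω.U j) := fun u => ⟨γ u, hi u.2, hj u.2⟩
  have hg : Continuous g := hγ.domRestrict.subtype_mk _
  have hconst := ((ω.locConst i j).comp_continuous hg).apply_eq_of_preconnectedSpace
    ⟨b, right_mem_Icc.2 hab⟩ ⟨a, left_mem_Icc.2 hab⟩
  simp only [Function.comp_apply, g] at hconst
  linarith

theorem isIntegralOn_single {γ : ℝ → X} {a b : ℝ} {i : ω.ι} (hab : a < b)
    (hi : MapsTo γ (Icc a b) (ω.U i)) :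
    ω.IsIntegralOn γ a b (ω.f i (γ b) - ω.f i (γ a)) :=
  ⟨1, fun | 0 => a | _ + 1 => b, fun _ => i, one_pos, rfl, rfl, by simpa using hab,
    by simpa using hi, by simp⟩

theorem IsIntegralOn.cons {γ : ℝ → X} {a m b r : ℝ} {i : ω.ι} (ham : a < m)
    (hi : MapsTo γ (Icc a m) (ω.U i)) (h : ω.IsIntegralOn γ m b r) :
    ω.IsIntegralOn γ a b (ω.f i (γ m) - ω.f i (γ a) + r) := by
  obtain ⟨n, t, c, hn, rfl, htn, hlt, hmaps, rfl⟩ := h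
  refine ⟨n + 1, fun | 0 => a | k + 1 => t k, fun | 0 => i | k + 1 => c k, n.succ_pos, rfl, htn,
    ?_, ?_, ?_⟩
  · rintro (_ | k) hk
    exacts [ham, hlt k (by omega)]
  · rintro (_ | k) hk
    exacts [hi, hmaps k (by omega)]
  · rw [Finset.sum_range_succ', add_comm]

@[elab_as_elim]
theorem IsIntegralOn.induction {γ : ℝ → X} {b : ℝ}
    {motive : ∀ a r, ω.IsIntegralOn γ a b r → Prop}
    (single : ∀ a i (hab : a < b) (hi : MapsTo γ (Icc a b) (ω.U i)),
      motive a _ (isIntegralOn_single hab hi))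
    (cons : ∀ a m r i (ham : a < m) (hi : MapsTo γ (Icc a m) (ω.U i))
      (h : ω.IsIntegralOn γ m b r), motive m r h → motive a _ (h.cons ham hi))
    {a r : ℝ} (h : ω.IsIntegralOn γ a b r) : motive a r h := by
  obtain ⟨n, t, c, hn, rfl, htn, hlt, hmaps, hr⟩ := h
  induction n generalizing t c r with
  | zero => omega
  | succ n ih =>
    rcases n.eq_zero_or_pos with rfl | hn
    · subst htn
      obtain rfl : r = ω.f (c 0) (γ (t 1)) - ω.f (c 0) (γ (t 0)) := by simpa using hr
      exact single (t 0) (c 0) (hlt 0 one_pos) (hmaps 0 one_pos)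
    · have hlt' : ∀ k < n, t (k + 1) < t (k + 1 + 1) := fun k hk => hlt (k + 1) (by omega)
      have hmaps' : ∀ k < n, MapsTo γ (Icc (t (k + 1)) (t (k + 1 + 1))) (ω.U (c (k + 1))) :=
        fun k hk => hmaps (k + 1) (by omega)
      rw [Finset.sum_range_succ', add_comm] at hr
      subst hr
      exact cons _ _ _ _ (hlt 0 (by omega)) (hmaps 0 (by omega))
        ⟨n, _, _, hn, rfl, htn, hlt', hmaps', rfl⟩ (ih _ _ hn htn hlt' hmaps' rfl)

theorem IsIntegralOn.lt {γ : ℝ → X} {a b r : ℝ} (h : ω.IsIntegralOn γ a b r) : a < b := by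
  induction h using IsIntegralOn.induction with
  | single _ _ hab => exact hab
  | cons _ _ _ _ ham _ _ hmb => exact ham.trans hmb

theorem IsIntegralOn.congr {γ γ' : ℝ → X} {a b r : ℝ} (h : ω.IsIntegralOn γ a b r)
    (hγ : EqOn γ γ' (Icc a b)) : ω.IsIntegralOn γ' a b r := by
  induction h using IsIntegralOn.induction with
  | single a i hab hi =>
    rw [hγ (left_mem_Icc.2 hab.le), hγ (right_mem_Icc.2 hab.le)]
    exact isIntegralOn_single hab (hi.congr hγ)
  | cons a m r i ham hi h ih =>
    have hsub : Icc a m ⊆ Icc a b := Icc_subset_Icc_right h.lt.le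
    rw [hγ (hsub (left_mem_Icc.2 ham.le)), hγ (hsub (right_mem_Icc.2 ham.le))]
    exact (ih (hγ.mono (Icc_subset_Icc_left ham.le))).cons ham (hi.congr (hγ.mono hsub))

theorem IsIntegralOn.trans {γ : ℝ → X} {a b c r s : ℝ} (h₁ : ω.IsIntegralOn γ a b r)
    (h₂ : ω.IsIntegralOn γ b c s) : ω.IsIntegralOn γ a c (r + s) := by
  induction h₁ using IsIntegralOn.induction with
  | single a i hab hi => exact h₂.cons hab hi
  | cons a m r i ham hi _ ih =>
    rw [add_assoc]
    exact ih.cons ham hi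

theorem IsIntegralOn.exists_split {γ : ℝ → X} {a b m r : ℝ} (h : ω.IsIntegralOn γ a b r)
    (ham : a < m) (hmb : m < b) :
    ∃ r₁ r₂, r = r₁ + r₂ ∧ ω.IsIntegralOn γ a m r₁ ∧ ω.IsIntegralOn γ m b r₂ := by
  induction h using IsIntegralOn.induction with
  | single a i _ hi =>
    exact ⟨_, _, by ring, isIntegralOn_single ham (hi.mono_left (Icc_subset_Icc_right hmb.le)),
      isIntegralOn_single hmb (hi.mono_left (Icc_subset_Icc_left ham.le))⟩
  | cons a m₀ r i ham₀ hi h ih =>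
    rcases lt_trichotomy m m₀ with hlt | rfl | hgt
    · exact ⟨_, _, by ring, isIntegralOn_single ham (hi.mono_left (Icc_subset_Icc_right hlt.le)),
        h.cons hlt (hi.mono_left (Icc_subset_Icc_left ham.le))⟩
    · exact ⟨_, r, rfl, isIntegralOn_single ham hi, h⟩
    · obtain ⟨r₁, r₂, rfl, h₁, h₂⟩ := ih hgt
      exact ⟨_, r₂, by ring, h₁.cons ham₀ hi, h₂⟩

theorem IsIntegralOn.eq_sub_of_mapsTo {γ : ℝ → X} {a b r : ℝ} {i : ω.ι}
    (h : ω.IsIntegralOn γ a b r) (hγ : ContinuousOn γ (Icc a b))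
    (hi : MapsTo γ (Icc a b) (ω.U i)) : r = ω.f i (γ b) - ω.f i (γ a) := by
  induction h using IsIntegralOn.induction with
  | single a j hab hj => exact ω.sub_eq_sub_of_mapsTo_Icc hab.le hγ hj hi
  | cons a m r j ham hj h ih =>
    have hleft : Icc a m ⊆ Icc a b := Icc_subset_Icc_right h.lt.le
    have hright : Icc m b ⊆ Icc a b := Icc_subset_Icc_left ham.le
    rw [ih (hγ.mono hright) (hi.mono_left hright),
      ω.sub_eq_sub_of_mapsTo_Icc ham.le (hγ.mono hleft) hj (hi.mono_left hleft)]
    ring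

theorem IsIntegralOn.unique {γ : ℝ → X} {a b r r' : ℝ} (h : ω.IsIntegralOn γ a b r)
    (h' : ω.IsIntegralOn γ a b r') (hγ : ContinuousOn γ (Icc a b)) : r = r' := by
  induction h using IsIntegralOn.induction generalizing r' with
  | single a i _ hi => exact (h'.eq_sub_of_mapsTo hγ hi).symm
  | cons a m r i ham hi h ih =>
    obtain ⟨r₁, r₂, rfl, h₁, h₂⟩ := h'.exists_split ham h.lt
    rw [h₁.eq_sub_of_mapsTo (hγ.mono (Icc_subset_Icc_right h.lt.le)) hi,
      ih h₂ (hγ.mono (Icc_subset_Icc_left ham.le))]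

theorem IsIntegralOn.intOn_eq {γ : ℝ → X} {a b r : ℝ} (h : ω.IsIntegralOn γ a b r)
    (hγ : ContinuousOn γ (Icc a b)) : ω.intOn γ a b = r := by
  have hex : ∃ r, ω.IsIntegralOn γ a b r := ⟨r, h⟩
  simp only [intOn, dif_pos hex]
  exact hex.choose_spec.unique h hγ

theorem IsIntegralOn.comp_orderIso {γ : ℝ → X} {a b r : ℝ} (e : ℝ ≃o ℝ)
    (h : ω.IsIntegralOn γ (e a) (e b) r) : ω.IsIntegralOn (γ ∘ e) a b r := by
  obtain ⟨n, t, c, hn, ht0, htn, hlt, hmaps, rfl⟩ := h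
  refine ⟨n, fun k => e.symm (t k), c, hn, by simp [ht0], by simp [htn],
    fun k hk => e.symm.strictMono (hlt k hk), fun k hk u hu => hmaps k hk ?_, by simp⟩
  exact ⟨e.symm_apply_le.1 hu.1, e.le_symm_apply.1 hu.2⟩

theorem isIntegralOn_uniform {γ : ℝ → X} {m : ℕ} (hm : 0 < m) {c : ℕ → ω.ι}
    (hc : ∀ j < m, MapsTo γ (Icc (j / m : ℝ) ((j + 1) / m)) (ω.U (c j))) :
    ω.IsIntegralOn γ 0 1
      (∑ j ∈ Finset.range m, (ω.f (c j) (γ ((j + 1) / m)) - ω.f (c j) (γ (j / m)))) := by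
  have hm' : (0 : ℝ) < m := by exact_mod_cast hm
  refine ⟨m, fun j => j / m, c, hm, by simp, div_self hm'.ne', fun j _ => ?_, fun j hj => ?_, ?_⟩
  · push_cast
    gcongr
    linarith
  · push_cast
    exact hc j hj
  · push_cast
    rfl

variable (ω)

theorem exists_grid_mapsTo {G : ℝ × ℝ → X} (hG : Continuous G) :
    ∃ m : ℕ, 0 < m ∧ ∃ c : ℕ → ℕ → ω.ι, ∀ k < m, ∀ j < m,
      MapsTo G (Icc (k / m : ℝ) ((k + 1) / m) ×ˢ Icc (j / m : ℝ) ((j + 1) / m)) (ω.U (c k j)) := by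
  obtain ⟨δ, hδ, hball⟩ := lebesgue_number_lemma_of_metric (isCompact_Icc.prod isCompact_Icc)
    (fun i => (ω.isOpen i).preimage hG) (fun p _ => mem_iUnion.2 (ω.covers (G p)))
  obtain ⟨m, hm⟩ := exists_nat_gt (1 / δ)
  have hm0 : (0 : ℝ) < m := (one_div_pos.2 hδ).trans hm
  have hnode : ∀ k < m, (k / m : ℝ) ∈ Icc (0 : ℝ) 1 := fun k hk =>
    ⟨by positivity, (div_le_one hm0).2 (by exact_mod_cast hk.le)⟩
  have hclose : ∀ (k : ℕ), ∀ x ∈ Icc (k / m : ℝ) ((k + 1) / m), dist x (k / m) < δ := by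
    intro k x hx
    calc dist x (k / m) ≤ (k + 1) / m - k / m :=
          Real.dist_le_of_mem_Icc hx (left_mem_Icc.2 (by gcongr; linarith))
      _ = 1 / m := by ring
      _ < δ := (one_div_lt hδ hm0).1 hm
  have hcell : ∀ k j, ∃ i, k < m → j < m →
      MapsTo G (Icc (k / m : ℝ) ((k + 1) / m) ×ˢ Icc (j / m : ℝ) ((j + 1) / m)) (ω.U i) := by
    intro k j
    by_cases hkj : k < m ∧ j < m
    · obtain ⟨i, hi⟩ := hball (k / m, j / m) ⟨hnode k hkj.1, hnode j hkj.2⟩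
      exact ⟨i, fun _ _ p hp => hi (max_lt (hclose k _ hp.1) (hclose j _ hp.2))⟩
    · exact ⟨(ω.covers (G 0)).choose, fun hk hj => (hkj ⟨hk, hj⟩).elim⟩
  choose c hc using hcell
  exact ⟨m, by exact_mod_cast hm0, c, fun k hk j hj => hc k j hk hj⟩

theorem exists_isIntegralOn_zero_one {γ : ℝ → X} (hγ : Continuous γ) :
    ∃ r, ω.IsIntegralOn γ 0 1 r := by
  obtain ⟨m, hm, c, hc⟩ := ω.exists_grid_mapsTo (hγ.comp continuous_snd)
  have h0 : (0 : ℝ) ∈ Icc (((0 : ℕ) : ℝ) / m) ((((0 : ℕ) : ℝ) + 1) / m) :=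
    ⟨by simp, by positivity⟩
  exact ⟨_, isIntegralOn_uniform hm fun j hj u hu => hc 0 hm j hj (mk_mem_prod h0 hu)⟩

theorem intOn_eq_of_strip {G : ℝ × ℝ → X} (hG : Continuous G) {s s' : ℝ} (hss : s ≤ s')
    (h₀ : G (s, 0) = G (s', 0)) (h₁ : G (s, 1) = G (s', 1)) {m : ℕ} (hm : 0 < m) {c : ℕ → ω.ι}
    (hc : ∀ j < m, MapsTo G (Icc s s' ×ˢ Icc (j / m : ℝ) ((j + 1) / m)) (ω.U (c j))) :
    ω.intOn (fun u => G (s, u)) 0 1 = ω.intOn (fun u => G (s', u)) 0 1 := by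
  have hrow : ∀ σ ∈ Icc s s', ω.intOn (fun u => G (σ, u)) 0 1 =
      ∑ j ∈ Finset.range m, (ω.f (c j) (G (σ, (j + 1) / m)) - ω.f (c j) (G (σ, j / m))) :=
    fun σ hσ => (isIntegralOn_uniform hm fun j hj u hu => hc j hj ⟨hσ, hu⟩).intOn_eq
      (hG.comp (Continuous.prodMk_right σ)).continuousOn
  -- The two row sums differ by a telescoping sum of increments along vertical segments: adjacent
  -- charts give the same increment, and the outermost segments are constant.
  set v : ℕ → ℕ → ℝ := fun k j => ω.f (c k) (G (s', j / m)) - ω.f (c k) (G (s, j / m)) with hv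
  have hglue : ∀ k, k + 1 < m → v k (k + 1) = v (k + 1) (k + 1) := by
    intro k hk
    have hcont : Continuous fun σ => G (σ, ((k + 1 : ℕ) : ℝ) / m) :=
      hG.comp (Continuous.prodMk_left _)
    refine ω.sub_eq_sub_of_mapsTo_Icc hss hcont.continuousOn (fun σ hσ => ?_) (fun σ hσ => ?_)
    · refine hc k (by omega) ⟨hσ, ?_, le_of_eq (by push_cast; rfl)⟩
      push_cast
      gcongr
      linarith
    · refine hc (k + 1) hk ⟨hσ, le_of_eq (by push_cast; rfl), ?_⟩
      push_cast
      gcongr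
      linarith
  obtain ⟨n, rfl⟩ : ∃ n, m = n + 1 := ⟨m - 1, by omega⟩
  rw [hrow s (left_mem_Icc.2 hss), hrow s' (right_mem_Icc.2 hss), eq_comm, ← sub_eq_zero,
    ← Finset.sum_sub_distrib]
  calc _ = ∑ k ∈ Finset.range (n + 1), (v k (k + 1) - v k k) :=
        Finset.sum_congr rfl fun k _ => by simp only [hv]; push_cast; ring
    _ = v n (n + 1) - v 0 0 := Finset.sum_range_sub_of_glue v n fun k hk => hglue k (by omega)
    _ = 0 := by
      have hn : (n : ℝ) + 1 ≠ 0 := by positivity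
      simp [hv, div_self hn, h₀, h₁]

theorem intOn_eq_of_homotopy {G : ℝ × ℝ → X} (hG : Continuous G) {x y : X}
    (h₀ : ∀ s, G (s, 0) = x) (h₁ : ∀ s, G (s, 1) = y) :
    ω.intOn (fun u => G (0, u)) 0 1 = ω.intOn (fun u => G (1, u)) 0 1 := by
  obtain ⟨m, hm, c, hc⟩ := ω.exists_grid_mapsTo hG
  have hm' : (0 : ℝ) < m := by exact_mod_cast hm
  have hrows : ∀ k ≤ m,
      ω.intOn (fun u => G (0, u)) 0 1 = ω.intOn (fun u => G (k / m, u)) 0 1 := by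
    intro k hk
    induction k with
    | zero => simp
    | succ k ih =>
      rw [ih (by omega)]
      refine ω.intOn_eq_of_strip hG (by gcongr; simp) ((h₀ _).trans (h₀ _).symm)
        ((h₁ _).trans (h₁ _).symm) hm (c := c k) fun j hj => ?_
      push_cast
      exact hc k (by omega) j hj
  simpa [div_self hm'.ne'] using hrows m le_rfl

theorem pathIntegral_eq_of_homotopic {x y : X} {γ₁ γ₂ : Path x y} (h : γ₁.Homotopic γ₂) :
    pathIntegral ω γ₁ = pathIntegral ω γ₂ := by
  obtain ⟨H⟩ := h
  let G : ℝ × ℝ → X := fun p => H (projIcc 0 1 zero_le_one p.1, projIcc 0 1 zero_le_one p.2)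
  have hG : Continuous G := H.continuous.comp
    ((continuous_projIcc.comp continuous_fst).prodMk (continuous_projIcc.comp continuous_snd))
  have := ω.intOn_eq_of_homotopy hG (x := x) (y := y) (fun s => by simp [G])
    (fun s => by simp [G])
  simpa [G, pathIntegral, Path.extend, IccExtend] using this

theorem pathIntegral_eq {x y : X} {γ : Path x y} {r : ℝ}
    (h : ω.IsIntegralOn γ.extend 0 1 r) : pathIntegral ω γ = r :=
  h.intOn_eq γ.continuous_extend.continuousOn

theorem pathIntegral_trans {x y z : X} (γ₁ : Path x y) (γ₂ : Path y z) :
    pathIntegral ω (γ₁.trans γ₂) = pathIntegral ω γ₁ + pathIntegral ω γ₂ := by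
  obtain ⟨r₁, h₁⟩ := ω.exists_isIntegralOn_zero_one γ₁.continuous_extend
  obtain ⟨r₂, h₂⟩ := ω.exists_isIntegralOn_zero_one γ₂.continuous_extend
  let e₁ : ℝ ≃o ℝ := OrderIso.mulLeft₀ 2 two_pos
  let e₂ : ℝ ≃o ℝ := e₁.trans (OrderIso.addRight (-1))
  have h₁' : ω.IsIntegralOn (γ₁.trans γ₂).extend 0 (1 / 2) r₁ := by
    refine (IsIntegralOn.comp_orderIso (γ := γ₁.extend) e₁ ?_).congr fun t ht => ?_
    · simpa [e₁] using h₁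
    · simp [e₁, Path.extend_trans_of_le_half _ _ ht.2]
  have h₂' : ω.IsIntegralOn (γ₁.trans γ₂).extend (1 / 2) 1 r₂ := by
    refine (IsIntegralOn.comp_orderIso (γ := γ₂.extend) e₂ ?_).congr fun t ht => ?_
    · convert h₂ using 1 <;> norm_num [e₂, e₁]
    · simp [e₂, e₁, Path.extend_trans_of_half_le _ _ ht.1, sub_eq_add_neg]
  rw [pathIntegral_eq ω (h₁'.trans h₂'), pathIntegral_eq ω h₁, pathIntegral_eq ω h₂]

noncomputable def homotopyClassIntegral {x y : X} (p : Path.Homotopic.Quotient x y) : ℝ :=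
  Quotient.liftOn p (pathIntegral ω) fun _ _ => ω.pathIntegral_eq_of_homotopic

theorem homotopyClassIntegral_trans {x y z : X} (p : Path.Homotopic.Quotient x y)
    (q : Path.Homotopic.Quotient y z) :
    ω.homotopyClassIntegral (p.trans q) = ω.homotopyClassIntegral p + ω.homotopyClassIntegral q :=
  Quotient.inductionOn₂ p q ω.pathIntegral_trans

end ClosedOneForm

/-- The line integral descends to a well-defined homomorphism of periods
`π₁(X,x₀) → (ℝ,+)`. -/
theorem exists_periods_homomorphism
    {X : Type} [TopologicalSpace X] (ω : ClosedOneForm X) (x₀ : X) :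
    ∃ φ : FundamentalGroup X x₀ → ℝ,
      (∀ γ : Path x₀ x₀,
        φ (FundamentalGroup.fromPath (X := TopCat.of X) ⟦γ⟧) = pathIntegral ω γ) ∧
      (∀ a b : FundamentalGroup X x₀, φ (a * b) = φ a + φ b) := by
  refine ⟨fun a => ω.homotopyClassIntegral (FundamentalGroup.toPath (X := TopCat.of X) a),
    fun γ => rfl, fun a b => ?_⟩
  -- `a * b` is the composite `b ≫ a` in the fundamental groupoid
  show ω.homotopyClassIntegral (Path.Homotopic.Quotient.trans _ _) = _
  rw [ω.homotopyClassIntegral_trans, add_comm]
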